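/- arXiv:2209.06379 — 6 statements merged into one kernel-verified Lean document; each statement's English description precedes it below -/
import Mathlib

section
/- Let A=(a_1,...,a_n) and B=(b_1,...,b_n) be sequences of nonnegative integers in good order with a_i ≤ b_i for all i. If the pair (A;B) is realizable by a simple graph, then for every t with 0 ≤ t ≤ n, ∑_{i=1}^t a_i ≤ ∑_{i=1}^t b̄_i, where (b̄_1,...,b̄_n) is the Berge sequence of B. -/
open Finset
open Classical

/-- The pair `(A;B)` is realizable by a simple graph: there is a simple graph `G`
on vertices `v_1, …, v_n` with `a i ≤ deg(v_i) ≤ b i` for `1 ≤ i ≤ n`.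
(Sequences are 1-indexed; vertex `i : Fin n` corresponds to index `i+1`.) -/
def Realizable (n : ℕ) (a b : ℕ → ℕ) : Prop :=
  ∃ (G : SimpleGraph (Fin n)) (_ : DecidableRel G.Adj),
    ∀ i : Fin n, a (i.1 + 1) ≤ G.degree i ∧ G.degree i ≤ b (i.1 + 1)

/-- `A` and `B` are in good order: `(a_{i+1}, b_{i+1}) ⪯ (a_i, b_i)` lexicographically. -/
def GoodOrder (n : ℕ) (a b : ℕ → ℕ) : Prop :=
  ∀ i, 1 ≤ i → i + 1 ≤ n →
    a (i + 1) < a i ∨ (a (i + 1) = a i ∧ b (i + 1) ≤ b i)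

/-- The set `I_t = {i : t+1 ≤ i ≤ n, b i ≥ t+1}`. -/
def Iset (n : ℕ) (b : ℕ → ℕ) (t : ℕ) : Finset ℕ :=
  (Finset.Icc (t + 1) n).filter fun i => t + 1 ≤ b i

/-- The parity correction `ε(t)` of Cai–Deng–Zang. -/
noncomputable def eps (n : ℕ) (a b : ℕ → ℕ) (t : ℕ) : ℤ :=
  if (∀ i ∈ Iset n b t, a i = b i) ∧
      Odd (∑ i ∈ Iset n b t, b i + t * (Iset n b t).card)
  then 1 else 0

/-- `berge n b i` is the `i`-th column sum of the `n × n` 0-1 matrix in which row `k`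
has its `b k` leading entries equal to `1`, skipping the diagonal entry `(k,k)`. -/
def berge (n : ℕ) (b : ℕ → ℕ) (i : ℕ) : ℕ :=
  ((Finset.Icc 1 n).filter fun k => k ≠ i ∧ (i ≤ b k ∨ (i = b k + 1 ∧ k ≤ b k))).card

/-- The conjugate sequence: `conj n b i = |{k : 1 ≤ k ≤ n, b k ≥ i}|`. -/
def conj (n : ℕ) (b : ℕ → ℕ) (i : ℕ) : ℕ :=
  ((Finset.Icc 1 n).filter fun k => i ≤ b k).card

/-- `g = max{i : c_i ≥ i}` (0 if there is no such index). -/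
def gIdx (n : ℕ) (c : ℕ → ℕ) : ℕ :=
  ((Finset.Icc 1 n).filter fun i => i ≤ c i).sup id

/-- The Ryser modification: `c̃_i = c_i + 1` for `i ≤ g`, and `c̃_i = c_i` otherwise. -/
def tilde (n : ℕ) (c : ℕ → ℕ) (i : ℕ) : ℕ :=
  if i ≤ gIdx n c then c i + 1 else c i

/-- `s = max{i : a_i ≥ i - 1}` (0 if there is no such index). -/
def sIdx (n : ℕ) (a : ℕ → ℕ) : ℕ :=
  ((Finset.Icc 1 n).filter fun i => i ≤ a i + 1).sup id

/-- The interval pair `(S;S)` is bipartite-interval realizable: there is a bipartite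
graph `F` with parts `{x_1,…,x_n}`, `{y_1,…,y_n}` (modelled on `Fin n ⊕ Fin n`, all
edges going between the parts) with `lo i ≤ deg(x_i) ≤ hi i` and `lo i ≤ deg(y_i) ≤ hi i`. -/
def BipIntervalRealizable (n : ℕ) (lo hi : ℕ → ℕ) : Prop :=
  ∃ (F : SimpleGraph (Fin n ⊕ Fin n)) (_ : DecidableRel F.Adj),
    (∀ u v, F.Adj u v → u.isLeft ≠ v.isLeft) ∧
    (∀ i : Fin n, lo (i.1 + 1) ≤ F.degree (Sum.inl i) ∧ F.degree (Sum.inl i) ≤ hi (i.1 + 1)) ∧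
    (∀ i : Fin n, lo (i.1 + 1) ≤ F.degree (Sum.inr i) ∧ F.degree (Sum.inr i) ≤ hi (i.1 + 1))

/-!
Let `T` be the first `t` vertices of a realizing graph `G`. Then `∑_{i ≤ t} a_i ≤ ∑_{v ∈ T} deg v`,
and counting the edges leaving `T` from their endpoint outside `T` gives the Erdős–Gallai bound
`∑_{v ∈ T} deg v ≤ ∑_{v ∈ T} min(b_v, t - 1) + ∑_{w ∉ T} min(b_w, t)`. Reading the Berge matrix
by rows, the part of row `k` lying in the first `t` columns has exactly `min(b_k, t - 1)` ones if
`k ≤ t` and `min(b_k, t)` ones otherwise, so the right-hand side is `∑_{i ≤ t} b̄_i`.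
-/

theorem Fin.sum_univ_add_one_eq_sum_Icc {M : Type*} [AddCommMonoid M] (n : ℕ) (f : ℕ → M) :
    ∑ i : Fin n, f (i + 1) = ∑ k ∈ Icc 1 n, f k := by
  rw [Fin.sum_univ_eq_sum_range (fun i => f (i + 1)), range_eq_Ico, sum_Ico_add', zero_add,
    Ico_add_one_right_eq_Icc]

theorem Fin.sum_filter_add_one_le_eq_sum_Icc {M : Type*} [AddCommMonoid M] {n t : ℕ}
    (ht : t ≤ n) (f : ℕ → M) :
    ∑ i ∈ univ.filter (fun i : Fin n => i + 1 ≤ t), f (i + 1) = ∑ k ∈ Icc 1 t, f k := by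
  rw [sum_filter, Fin.sum_univ_add_one_eq_sum_Icc n (fun k => if k ≤ t then f k else 0),
    ← sum_filter]
  congr 1
  ext k
  simp only [mem_filter, mem_Icc]
  omega

theorem SimpleGraph.sum_degree_le_sum_min {V : Type*} [Fintype V] [DecidableEq V]
    (G : SimpleGraph V) [DecidableRel G.Adj] (s : Finset V) (d : V → ℕ)
    (hd : ∀ v, G.degree v ≤ d v) :
    ∑ v ∈ s, G.degree v ≤ ∑ v, if v ∈ s then min (d v) (#s - 1) else min (d v) #s := by
  have hsplit : ∀ v, G.degree v = #(s.filter (G.Adj v)) + #(sᶜ.filter (G.Adj v)) := by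
    intro v
    rw [← card_neighborFinset_eq_degree, neighborFinset_eq_filter]
    simp only [card_filter]
    exact (sum_add_sum_compl s _).symm
  have hcross : ∑ v ∈ s, #(sᶜ.filter (G.Adj v)) = ∑ w ∈ sᶜ, #(s.filter (G.Adj w)) := by
    simpa [bipartiteAbove, bipartiteBelow, G.adj_comm] using
      sum_card_bipartiteAbove_eq_sum_card_bipartiteBelow (s := s) (t := sᶜ) (r := G.Adj)
  have hle_degree : ∀ v, #(s.filter (G.Adj v)) ≤ d v := fun v =>
    ((card_le_card fun w hw => (G.mem_neighborFinset v w).2 (mem_filter.1 hw).2).trans_eq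
      (G.card_neighborFinset_eq_degree v)).trans (hd v)
  have hle_inside : ∀ v ∈ s, #(s.filter (G.Adj v)) ≤ #s - 1 := fun v hv =>
    (card_le_card fun w hw => mem_erase.2 ⟨(G.ne_of_adj (mem_filter.1 hw).2).symm,
      (mem_filter.1 hw).1⟩).trans_eq (card_erase_of_mem hv)
  calc ∑ v ∈ s, G.degree v
      = ∑ v ∈ s, #(s.filter (G.Adj v)) + ∑ w ∈ sᶜ, #(s.filter (G.Adj w)) := by
        rw [← hcross, ← sum_add_distrib]
        exact sum_congr rfl fun v _ => hsplit v
    _ ≤ ∑ v ∈ s, min (d v) (#s - 1) + ∑ w ∈ sᶜ, min (d w) #s :=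
        add_le_add (sum_le_sum fun v hv => le_min (hle_degree v) (hle_inside v hv))
          (sum_le_sum fun w _ => le_min (hle_degree w) (card_filter_le _ _))
    _ = ∑ v, if v ∈ s then min (d v) (#s - 1) else min (d v) #s := by
        rw [← sum_add_sum_compl s]
        congr 1 <;> refine sum_congr rfl fun v hv => ?_
        · rw [if_pos hv]
        · rw [if_neg (mem_compl.1 hv)]

theorem card_berge_row_Icc (b k t : ℕ) (hk : 1 ≤ k) :
    #((Icc 1 t).filter fun i => k ≠ i ∧ (i ≤ b ∨ (i = b + 1 ∧ k ≤ b))) =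
      if k ≤ t then min b (t - 1) else min b t := by
  rcases le_or_gt k b with hkb | hbk
  · have hrow : (Icc 1 t).filter (fun i => k ≠ i ∧ (i ≤ b ∨ (i = b + 1 ∧ k ≤ b)))
        = (Icc 1 (min (b + 1) t)).erase k := by
      ext i
      simp only [mem_filter, mem_Icc, mem_erase]
      omega
    rw [hrow, card_erase_eq_ite, Nat.card_Icc]
    simp only [mem_Icc]
    split_ifs <;> omega
  · have hrow : (Icc 1 t).filter (fun i => k ≠ i ∧ (i ≤ b ∨ (i = b + 1 ∧ k ≤ b)))
        = Icc 1 (min b t) := by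
      ext i
      simp only [mem_filter, mem_Icc]
      omega
    rw [hrow, Nat.card_Icc]
    split_ifs <;> omega

theorem sum_berge_Icc (n t : ℕ) (b : ℕ → ℕ) :
    ∑ i ∈ Icc 1 t, berge n b i =
      ∑ k ∈ Icc 1 n, if k ≤ t then min (b k) (t - 1) else min (b k) t := by
  simp only [berge, card_filter]
  rw [sum_comm]
  refine sum_congr rfl fun k hk => ?_
  rw [← card_berge_row_Icc (b k) k t (mem_Icc.1 hk).1, card_filter]

theorem realizable_imp_berge_ineq_general (n : ℕ) (a b : ℕ → ℕ)
    (hreal : Realizable n a b) :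
    ∀ t, t ≤ n → ∑ i ∈ Finset.Icc 1 t, a i ≤ ∑ i ∈ Finset.Icc 1 t, berge n b i := by
  obtain ⟨G, _, hdeg⟩ := hreal
  intro t ht
  set T := univ.filter (fun i : Fin n => i + 1 ≤ t)
  have hT : #T = t := by
    rw [card_eq_sum_ones]
    exact (Fin.sum_filter_add_one_le_eq_sum_Icc ht fun _ => 1).trans (by simp)
  calc ∑ i ∈ Icc 1 t, a i
      = ∑ i ∈ T, a (i + 1) := (Fin.sum_filter_add_one_le_eq_sum_Icc ht a).symm
    _ ≤ ∑ i ∈ T, G.degree i := sum_le_sum fun i _ => (hdeg i).1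
    _ ≤ ∑ i, if i ∈ T then min (b (i + 1)) (#T - 1) else min (b (i + 1)) #T :=
        G.sum_degree_le_sum_min T _ fun i => (hdeg i).2
    _ = ∑ k ∈ Icc 1 n, if k ≤ t then min (b k) (t - 1) else min (b k) t := by
        rw [hT, ← Fin.sum_univ_add_one_eq_sum_Icc]
        simp [T]
    _ = ∑ i ∈ Icc 1 t, berge n b i := (sum_berge_Icc n t b).symm

/-- Theorem 2.1: if `(A;B)` (in good order, with `a_i ≤ b_i`) is realizable by a graph,
then `∑_{i=1}^t a_i ≤ ∑_{i=1}^t b̄_i` for every `0 ≤ t ≤ n`, where `b̄` is the Berge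
sequence of `B`. -/
theorem realizable_imp_berge_ineq (n : ℕ) (a b : ℕ → ℕ)
    (hgood : GoodOrder n a b) (hab : ∀ i, 1 ≤ i → i ≤ n → a i ≤ b i)
    (hreal : Realizable n a b) :
    ∀ t, t ≤ n → ∑ i ∈ Finset.Icc 1 t, a i ≤ ∑ i ∈ Finset.Icc 1 t, berge n b i :=
  realizable_imp_berge_ineq_general n a b hreal
end

section
/- There exist sequences A=(5,4,3,3,3,1) and B=(5,5,3,3,3,1) in good order with a_i ≤ b_i such that the Berge condition ∑_{i=1}^t a_i ≤ ∑_{i=1}^t b̄_i holds for all 0 ≤ t ≤ 6 (where the Berge sequence of B is (5,4,4,3,2,2)), yet the pair (A;B) is not realizable by any simple graph. -/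
open Finset
open Classical

/-- The sequence `A = (5,4,3,3,3,1)`. -/
def aEx : ℕ → ℕ
  | 1 => 5 | 2 => 4 | 3 => 3 | 4 => 3 | 5 => 3 | 6 => 1 | _ => 0

/-- The sequence `B = (5,5,3,3,3,1)`. -/
def bEx : ℕ → ℕ
  | 1 => 5 | 2 => 5 | 3 => 3 | 4 => 3 | 5 => 3 | 6 => 1 | _ => 0

/-- The pair `A=(5,4,3,3,3,1)`, `B=(5,5,3,3,3,1)` is in good order with `a_i ≤ b_i`,
its Berge sequence is `(5,4,4,3,2,2)`, and the Berge inequalities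
`∑_{i=1}^t a_i ≤ ∑_{i=1}^t b̄_i` hold for all `0 ≤ t ≤ 6`; yet `(A;B)` is not realizable. -/
theorem berge_ineq_not_sufficient :
    GoodOrder 6 aEx bEx ∧ (∀ i, 1 ≤ i → i ≤ 6 → aEx i ≤ bEx i) ∧
    (berge 6 bEx 1 = 5 ∧ berge 6 bEx 2 = 4 ∧ berge 6 bEx 3 = 4 ∧
      berge 6 bEx 4 = 3 ∧ berge 6 bEx 5 = 2 ∧ berge 6 bEx 6 = 2) ∧
    (∀ t, t ≤ 6 → ∑ i ∈ Finset.Icc 1 t, aEx i ≤ ∑ i ∈ Finset.Icc 1 t, berge 6 bEx i) ∧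
    ¬ Realizable 6 aEx bEx := by
  refine ⟨?_, ?_, ?_, ?_, ?_⟩
  · intro i h1 h2
    have : i ≤ 5 := by omega
    interval_cases i <;> simp [aEx, bEx]
  · intro i h1 h2; interval_cases i <;> simp [aEx, bEx]
  · refine ⟨?_, ?_, ?_, ?_, ?_, ?_⟩ <;> decide
  · intro t ht; interval_cases t <;> decide
  · rintro ⟨G, inst, h⟩
    have h0 := h 0
    have h1 := h 1
    have h2 := h 2
    have h3 := h 3
    have h4 := h 4
    have h5 := h 5
    simp only [aEx, bEx] at h0 h1 h2 h3 h4 h5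
    have hd0 : G.degree 0 = 5 := le_antisymm h0.2 h0.1
    have hd2 : G.degree 2 = 3 := le_antisymm h2.2 h2.1
    have hd3 : G.degree 3 = 3 := le_antisymm h3.2 h3.1
    have hd4 : G.degree 4 = 3 := le_antisymm h4.2 h4.1
    have hd5 : G.degree 5 = 1 := le_antisymm h5.2 h5.1
    have hsum := G.sum_degrees_eq_twice_card_edges
    have hsum' : ∑ v : Fin 6, G.degree v =
        G.degree 0 + G.degree 1 + G.degree 2 + G.degree 3 + G.degree 4 + G.degree 5 := by
      simp [Fin.sum_univ_six]
    have heven : Even (∑ v : Fin 6, G.degree v) := ⟨G.edgeFinset.card, by omega⟩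
    rw [hsum', hd0, hd2, hd3, hd4, hd5] at heven
    have hd1 : G.degree 1 = 5 := by
      rcases heven with ⟨k, hk⟩
      have h1' : 4 ≤ G.degree 1 ∧ G.degree 1 ≤ 5 := h1
      omega
    -- degree 5 vertices are adjacent to everyone else
    have key : ∀ v : Fin 6, G.degree v = 5 → ∀ w, w ≠ v → G.Adj v w := by
      intro v hv w hw
      have hsub : G.neighborFinset v ⊆ Finset.univ.erase v := by
        intro x hx
        rw [SimpleGraph.mem_neighborFinset] at hx
        exact Finset.mem_erase.2 ⟨(G.ne_of_adj hx).symm, Finset.mem_univ x⟩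
      have hcard : (Finset.univ.erase v).card = 5 := by
        rw [Finset.card_erase_of_mem (Finset.mem_univ v)]; simp
      have heq : G.neighborFinset v = Finset.univ.erase v :=
        Finset.eq_of_subset_of_card_le hsub (by
          rw [hcard, SimpleGraph.card_neighborFinset_eq_degree, hv])
      have : w ∈ G.neighborFinset v := by
        rw [heq]; exact Finset.mem_erase.2 ⟨hw, Finset.mem_univ w⟩
      rwa [SimpleGraph.mem_neighborFinset] at this
    have a05 : G.Adj 0 5 := key 0 hd0 5 (by decide)
    have a15 : G.Adj 1 5 := key 1 hd1 5 (by decide)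
    have hsub5 : ({0, 1} : Finset (Fin 6)) ⊆ G.neighborFinset 5 := by
      intro x hx
      rw [SimpleGraph.mem_neighborFinset]
      rcases Finset.mem_insert.1 hx with rfl | hx
      · exact a05.symm
      · rw [Finset.mem_singleton] at hx; subst hx; exact a15.symm
    have : 2 ≤ G.degree 5 := by
      rw [← SimpleGraph.card_neighborFinset_eq_degree]
      calc 2 = ({0, 1} : Finset (Fin 6)).card := by decide
        _ ≤ _ := Finset.card_le_card hsub5
    omega
end

section
/- For a sequence B=(b_1,...,b_n) of nonnegative integers with Berge sequence (b̄_1,...,b̄_n), for every t with 0 ≤ t ≤ n one has ∑_{i=1}^t b̄_i ≤ t(t−1) + ∑_{j=t+1}^n min{b_j, t}. -/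
/-!
Count the ones in the first `t` columns row by row. A row `k ≤ t` meets these columns in at most
`t - 1` ones, since its diagonal entry is skipped. A row `k > t` has at most `min (b k) t` of them:
its ones can only spill past column `b k` when `k ≤ b k`, and then they spill beyond column `t`.
-/

open Finset
open Classical

/-- Entry `(k, i)` of the matrix defining `berge`: the `b k` ones of row `k` skip the diagonal,
so they reach column `b k + 1` exactly when `k ≤ b k`. -/
def BergeEntry (b : ℕ → ℕ) (k i : ℕ) : Prop :=
  k ≠ i ∧ (i ≤ b k ∨ (i = b k + 1 ∧ k ≤ b k))

theorem berge_eq_card_bergeEntry (n : ℕ) (b : ℕ → ℕ) (i : ℕ) :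
    berge n b i = #{k ∈ Icc 1 n | BergeEntry b k i} := by
  rw [berge]
  congr

theorem sum_berge_eq_sum_card_bergeEntry (n t : ℕ) (b : ℕ → ℕ) :
    ∑ i ∈ Icc 1 t, berge n b i = ∑ k ∈ Icc 1 n, #{i ∈ Icc 1 t | BergeEntry b k i} := by
  simp only [berge_eq_card_bergeEntry, card_filter]
  exact sum_comm

theorem card_bergeEntry_le_sub_one {t k : ℕ} (b : ℕ → ℕ) (hk : k ∈ Icc 1 t) :
    #{i ∈ Icc 1 t | BergeEntry b k i} ≤ t - 1 := by
  have hsub : {i ∈ Icc 1 t | BergeEntry b k i} ⊆ (Icc 1 t).erase k :=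
    fun i hi => mem_erase.2 ⟨fun h => (mem_filter.1 hi).2.1 h.symm, (mem_filter.1 hi).1⟩
  simpa [card_erase_of_mem hk] using card_le_card hsub

theorem card_bergeEntry_le_min {t k : ℕ} (b : ℕ → ℕ) (hk : t < k) :
    #{i ∈ Icc 1 t | BergeEntry b k i} ≤ min (b k) t := by
  refine le_min ?_ ?_
  · have hsub : {i ∈ Icc 1 t | BergeEntry b k i} ⊆ Icc 1 (b k) := by
      intro i hi
      rw [mem_filter, mem_Icc, BergeEntry] at hi
      rw [mem_Icc]
      omega
    simpa using card_le_card hsub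
  · simpa using card_filter_le (Icc 1 t) (BergeEntry b k)

/-- For any nonnegative integer sequence `B` with Berge sequence `b̄`, and every
`0 ≤ t ≤ n`: `∑_{i=1}^t b̄_i ≤ t(t−1) + ∑_{j=t+1}^n min{b_j, t}`. -/
theorem berge_partial_sum_le (n : ℕ) (b : ℕ → ℕ) :
    ∀ t, t ≤ n →
      ∑ i ∈ Finset.Icc 1 t, berge n b i ≤
        t * (t - 1) + ∑ j ∈ Finset.Icc (t + 1) n, min (b j) t := by
  intro t ht
  set row := fun k => #{i ∈ Icc 1 t | BergeEntry b k i}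
  have hupper : ∑ k ∈ Icc 1 t, row k ≤ t * (t - 1) := by
    simpa [mul_comm] using sum_le_card_nsmul _ row (t - 1) fun _ => card_bergeEntry_le_sub_one b
  have hlower : ∑ k ∈ Icc (t + 1) n, row k ≤ ∑ j ∈ Icc (t + 1) n, min (b j) t :=
    sum_le_sum fun k hk => card_bergeEntry_le_min b (mem_Icc.1 hk).1
  have hsplit : ∑ k ∈ Icc 1 n, row k = ∑ k ∈ Icc 1 t, row k + ∑ k ∈ Icc (t + 1) n, row k := by
    have hIoc (m : ℕ) : Icc 1 m = Ioc 0 m := Icc_add_one_left_eq_Ioc 0 m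
    rw [hIoc n, hIoc t, Icc_add_one_left_eq_Ioc t n]
    exact (sum_Ioc_consecutive row (Nat.zero_le t) ht).symm
  calc ∑ i ∈ Icc 1 t, berge n b i = ∑ k ∈ Icc 1 t, row k + ∑ k ∈ Icc (t + 1) n, row k := by
        rw [sum_berge_eq_sum_card_bergeEntry, hsplit]
    _ ≤ t * (t - 1) + ∑ j ∈ Icc (t + 1) n, min (b j) t := add_le_add hupper hlower
end

section
/- Let A and B be nonnegative integer sequences in good order with a_i ≤ b_i for all i. If (A;B) is realizable by a simple graph, then the interval pair (S;S) with S = [ã_1,b̃_1],...,[ã_n,b̃_n] is bipartite-interval realizable: there exists a bipartite graph F with parts {x_1,...,x_n}, {y_1,...,y_n} such that ã_i ≤ deg_F(x_i) ≤ b̃_i and ã_i ≤ deg_F(y_i) ≤ b̃_i for all i. -/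
open Finset
open Classical

/-! The bipartite double cover of `G`, with the rungs `x_i y_i` added for `i ≤ g(B)`, has
`deg(x_i) = deg(y_i) = deg_G(v_i) + [i ≤ g(B)]`. Since `a_i ≤ b_i` gives `g(A) ≤ g(B)`, this degree
lies in `[ã_i, b̃_i]`. -/

namespace SimpleGraph

variable {V W : Type*}

def bipartiteOfRel (R : V → W → Prop) : SimpleGraph (V ⊕ W) where
  Adj u v := match u, v with
    | .inl i, .inr j => R i j
    | .inr j, .inl i => R i j
    | _, _ => False
  symm := ⟨by rintro (i | j) (i' | j') h <;> exact h⟩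
  loopless := ⟨by rintro (i | j) h <;> exact h⟩

variable (R : V → W → Prop)

@[simp]
theorem bipartiteOfRel_adj_inl_inr (i : V) (j : W) :
    (bipartiteOfRel R).Adj (.inl i) (.inr j) ↔ R i j := Iff.rfl

@[simp]
theorem bipartiteOfRel_adj_inr_inl (i : V) (j : W) :
    (bipartiteOfRel R).Adj (.inr j) (.inl i) ↔ R i j := Iff.rfl

@[simp]
theorem bipartiteOfRel_not_adj_inl_inl (i i' : V) :
    ¬(bipartiteOfRel R).Adj (.inl i) (.inl i') := id

@[simp]
theorem bipartiteOfRel_not_adj_inr_inr (j j' : W) :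
    ¬(bipartiteOfRel R).Adj (.inr j) (.inr j') := id

theorem bipartiteOfRel_adj_isLeft_ne {u v : V ⊕ W} (h : (bipartiteOfRel R).Adj u v) :
    u.isLeft ≠ v.isLeft := by
  rcases u with i | j <;> rcases v with i' | j' <;> first | exact h.elim | simp

theorem bipartiteOfRel_neighborFinset_inl [Fintype W] [DecidableRel R] (i : V)
    [Fintype ((bipartiteOfRel R).neighborSet (.inl i))] :
    (bipartiteOfRel R).neighborFinset (.inl i) = ({j | R i j} : Finset W).map .inr := by
  ext (i' | j) <;> simp

theorem bipartiteOfRel_neighborFinset_inr [Fintype V] [DecidableRel R] (j : W)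
    [Fintype ((bipartiteOfRel R).neighborSet (.inr j))] :
    (bipartiteOfRel R).neighborFinset (.inr j) = ({i | R i j} : Finset V).map .inl := by
  ext (i | j') <;> simp

theorem bipartiteOfRel_degree_inl [Fintype W] [DecidableRel R] (i : V)
    [Fintype ((bipartiteOfRel R).neighborSet (.inl i))] :
    (bipartiteOfRel R).degree (.inl i) = #{j | R i j} := by
  rw [← card_neighborFinset_eq_degree, bipartiteOfRel_neighborFinset_inl, card_map]

theorem bipartiteOfRel_degree_inr [Fintype V] [DecidableRel R] (j : W)
    [Fintype ((bipartiteOfRel R).neighborSet (.inr j))] :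
    (bipartiteOfRel R).degree (.inr j) = #{i | R i j} := by
  rw [← card_neighborFinset_eq_degree, bipartiteOfRel_neighborFinset_inr, card_map]

def doubleCoverWithRungs (G : SimpleGraph V) (p : V → Prop) : SimpleGraph (V ⊕ V) :=
  bipartiteOfRel fun i j => G.Adj i j ∨ (i = j ∧ p i)

variable [Fintype V] [DecidableEq V] (G : SimpleGraph V) [DecidableRel G.Adj]
  (p : V → Prop) [DecidablePred p]

theorem card_filter_adj_or_eq_and (i : V) :
    #{j | G.Adj i j ∨ (i = j ∧ p i)} = G.degree i + if p i then 1 else 0 := by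
  rw [filter_or, card_union_of_disjoint, ← neighborFinset_eq_filter, card_neighborFinset_eq_degree]
  · by_cases hp : p i <;> simp [hp, filter_eq]
  · exact disjoint_filter.2 fun j _ hadj ⟨hij, _⟩ => G.loopless.irrefl j (hij ▸ hadj)

theorem doubleCoverWithRungs_degree_inl (i : V)
    [Fintype ((G.doubleCoverWithRungs p).neighborSet (.inl i))] :
    (G.doubleCoverWithRungs p).degree (.inl i) = G.degree i + if p i then 1 else 0 := by
  convert (bipartiteOfRel_degree_inl (fun i j => G.Adj i j ∨ (i = j ∧ p i)) i).trans
    (card_filter_adj_or_eq_and G p i)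
  rfl

theorem doubleCoverWithRungs_degree_inr (i : V)
    [Fintype ((G.doubleCoverWithRungs p).neighborSet (.inr i))] :
    (G.doubleCoverWithRungs p).degree (.inr i) = G.degree i + if p i then 1 else 0 := by
  have hsymm : #{j | G.Adj j i ∨ (j = i ∧ p j)} = #{j | G.Adj i j ∨ (i = j ∧ p i)} :=
    congrArg card <| filter_congr fun j _ => by
      rw [G.adj_comm]
      exact or_congr_right ⟨fun ⟨h, hp⟩ => ⟨h.symm, h ▸ hp⟩, fun ⟨h, hp⟩ => ⟨h.symm, h ▸ hp⟩⟩
  convert (bipartiteOfRel_degree_inr (fun i j => G.Adj i j ∨ (i = j ∧ p i)) i).trans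
    (hsymm.trans (card_filter_adj_or_eq_and G p i))
  rfl

end SimpleGraph

section Tilde

variable {n : ℕ} {a b : ℕ → ℕ} {i d : ℕ}

theorem gIdx_mono (hab : ∀ i, 1 ≤ i → i ≤ n → a i ≤ b i) : gIdx n a ≤ gIdx n b :=
  sup_mono fun i hi => by
    simp only [mem_filter, mem_Icc] at hi ⊢
    exact ⟨hi.1, hi.2.trans (hab i hi.1.1 hi.1.2)⟩

theorem tilde_le_add_ite {g : ℕ} (hd : a i ≤ d) (hg : gIdx n a ≤ g) :
    tilde n a i ≤ d + if i ≤ g then 1 else 0 := by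
  unfold tilde
  split_ifs <;> omega

theorem add_ite_le_tilde (hd : d ≤ b i) :
    d + (if i ≤ gIdx n b then 1 else 0) ≤ tilde n b i := by
  unfold tilde
  split_ifs <;> omega

end Tilde

theorem realizable_imp_bipartite_interval_general (n : ℕ) (a b : ℕ → ℕ)
    (hab : ∀ i, 1 ≤ i → i ≤ n → a i ≤ b i)
    (hreal : Realizable n a b) :
    BipIntervalRealizable n (tilde n a) (tilde n b) := by
  obtain ⟨G, _, hG⟩ := hreal
  let F := G.doubleCoverWithRungs fun i => i.1 + 1 ≤ gIdx n b
  have hdeg : ∀ i, tilde n a (i.1 + 1) ≤ G.degree i + (if i.1 + 1 ≤ gIdx n b then 1 else 0) ∧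
      G.degree i + (if i.1 + 1 ≤ gIdx n b then 1 else 0) ≤ tilde n b (i.1 + 1) := fun i =>
    ⟨tilde_le_add_ite (hG i).1 (gIdx_mono hab), add_ite_le_tilde (hG i).2⟩
  refine ⟨F, inferInstance, fun _ _ => SimpleGraph.bipartiteOfRel_adj_isLeft_ne _, fun i => ?_,
    fun i => ?_⟩
  · rw [SimpleGraph.doubleCoverWithRungs_degree_inl]
    exact hdeg i
  · rw [SimpleGraph.doubleCoverWithRungs_degree_inr]
    exact hdeg i

/-- Theorem 2.3: if `(A;B)` (in good order, with `a_i ≤ b_i`) is realizable, then the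
interval pair `(S;S)` with `S = [ã_1,b̃_1],…,[ã_n,b̃_n]` is bipartite-interval realizable. -/
theorem realizable_imp_bipartite_interval (n : ℕ) (a b : ℕ → ℕ)
    (hgood : GoodOrder n a b) (hab : ∀ i, 1 ≤ i → i ≤ n → a i ≤ b i)
    (hreal : Realizable n a b) :
    BipIntervalRealizable n (tilde n a) (tilde n b) :=
  realizable_imp_bipartite_interval_general n a b hab hreal
end

section
/- There exist sequences A=(5,4,3,3,3,1) and B=(5,5,3,3,3,1) in good order with a_i ≤ b_i such that the interval pair (S;S), where S = 6,[5,6],4,3,3,1 is obtained from Ã=(6,5,4,3,3,1) and B̃=(6,6,4,3,3,1), is bipartite-interval realizable, yet (A;B) is not realizable by any simple graph. -/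
open Finset
open Classical

/-- The auxiliary sequence `Ã = (6,5,4,3,3,1)`. -/
def atEx : ℕ → ℕ
  | 1 => 6 | 2 => 5 | 3 => 4 | 4 => 3 | 5 => 3 | 6 => 1 | _ => 0

/-- The auxiliary sequence `B̃ = (6,6,4,3,3,1)`. -/
def btEx : ℕ → ℕ
  | 1 => 6 | 2 => 6 | 3 => 4 | 4 => 3 | 5 => 3 | 6 => 1 | _ => 0

/-!
In a graph realizing `(A;B)` the degrees of `v₁, v₃, v₄, v₅, v₆` are forced to be `5, 3, 3, 3, 1`,
so the handshake lemma forces `deg v₂ = 5` too. Then `v₁` and `v₂` are both adjacent to every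
other vertex, and `v₆` has degree at least `2`. The bipartite relaxation has no parity constraint:
a symmetric `0-1` matrix with row sums `(6,5,4,3,3,1)` realizes `(S;S)` on both sides.
-/

namespace SimpleGraph

variable {α β V : Type*}

def ofBiadj (r : α → β → Prop) : SimpleGraph (α ⊕ β) where
  Adj
    | .inl a, .inr b => r a b
    | .inr b, .inl a => r a b
    | _, _ => False
  symm := ⟨by rintro (a | b) (a' | b') h <;> exact h⟩
  loopless := ⟨by rintro (a | b) h <;> exact h⟩

section ofBiadj

variable (r : α → β → Prop)

@[simp]
lemma ofBiadj_adj_inl_inr {a : α} {b : β} : (ofBiadj r).Adj (.inl a) (.inr b) ↔ r a b := .rfl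

@[simp]
lemma ofBiadj_adj_inr_inl {a : α} {b : β} : (ofBiadj r).Adj (.inr b) (.inl a) ↔ r a b := .rfl

@[simp]
lemma ofBiadj_not_adj_inl_inl {a a' : α} : ¬ (ofBiadj r).Adj (.inl a) (.inl a') := id

@[simp]
lemma ofBiadj_not_adj_inr_inr {b b' : β} : ¬ (ofBiadj r).Adj (.inr b) (.inr b') := id

lemma ofBiadj_isLeft_ne_of_adj {u v : α ⊕ β} (h : (ofBiadj r).Adj u v) : u.isLeft ≠ v.isLeft := by
  rcases u with a | b <;> rcases v with a' | b' <;> simp_all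

variable [Fintype α] [Fintype β] [DecidableRel (ofBiadj r).Adj] [DecidableRel r]

lemma degree_ofBiadj_inl (a : α) : (ofBiadj r).degree (.inl a) = #{b | r a b} := by
  have : (ofBiadj r).neighborFinset (.inl a) = ({b | r a b} : Finset β).map .inr := by
    ext (a' | b) <;> simp
  rw [← card_neighborFinset_eq_degree, this, card_map]

lemma degree_ofBiadj_inr (b : β) : (ofBiadj r).degree (.inr b) = #{a | r a b} := by
  have : (ofBiadj r).neighborFinset (.inr b) = ({a | r a b} : Finset α).map .inl := by
    ext (a | b') <;> simp
  rw [← card_neighborFinset_eq_degree, this, card_map]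

end ofBiadj

lemma two_le_degree_of_isUniversal [Fintype V] {G : SimpleGraph V} [DecidableRel G.Adj]
    {u v w : V} (hu : G.IsUniversal u) (hv : G.IsUniversal v) (huv : u ≠ v)
    (hwu : w ≠ u) (hwv : w ≠ v) : 2 ≤ G.degree w := by
  rw [← card_neighborFinset_eq_degree, ← card_pair huv]
  refine card_le_card fun x hx => ?_
  rcases mem_insert.1 hx with rfl | hx
  · exact (mem_neighborFinset ..).2 (hu hwu.symm).symm
  · rw [mem_singleton.1 hx]; exact (mem_neighborFinset ..).2 (hv hwv.symm).symm

end SimpleGraph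

lemma BipIntervalRealizable.congr {n : ℕ} {lo hi lo' hi' : ℕ → ℕ}
    (hlo : ∀ i, 1 ≤ i → i ≤ n → lo i = lo' i) (hhi : ∀ i, 1 ≤ i → i ≤ n → hi i = hi' i)
    (h : BipIntervalRealizable n lo hi) : BipIntervalRealizable n lo' hi' := by
  obtain ⟨F, _, hbip, hleft, hright⟩ := h
  have hlo' (i : Fin n) := hlo (i.1 + 1) i.1.succ_pos i.2
  have hhi' (i : Fin n) := hhi (i.1 + 1) i.1.succ_pos i.2
  exact ⟨F, _, hbip, fun i => hlo' i ▸ hhi' i ▸ hleft i, fun i => hlo' i ▸ hhi' i ▸ hright i⟩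

/-- The staircase `i + j ≤ 5`, whose degrees are `(6,5,4,3,2,1)`, with the diagonal entry `(4,4)`
added to raise the fifth degree to `3`. -/
def witnessRel (i j : Fin 6) : Prop := i.1 + j.1 ≤ 5 ∨ (i = 4 ∧ j = 4)

instance : DecidableRel witnessRel := fun i j => by unfold witnessRel; infer_instance

lemma card_witnessRel_left (i : Fin 6) : #{j | witnessRel i j} = atEx (i.1 + 1) := by
  revert i; decide

lemma card_witnessRel_right (j : Fin 6) : #{i | witnessRel i j} = atEx (j.1 + 1) := by
  revert j; decide

lemma atEx_le_btEx (i : ℕ) : atEx i ≤ btEx i := by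
  unfold atEx btEx; split <;> simp

lemma goodOrder_aEx_bEx : GoodOrder 6 aEx bEx := by
  intro i h1 hi
  have h5 : i ≤ 5 := by omega
  interval_cases i <;> decide

lemma aEx_le_bEx (i : ℕ) : aEx i ≤ bEx i := by
  unfold aEx bEx; split <;> simp

lemma tilde_aEx_bEx (i : ℕ) (h1 : 1 ≤ i) (h6 : i ≤ 6) :
    tilde 6 aEx i = atEx i ∧ tilde 6 bEx i = btEx i := by
  interval_cases i <;> exact ⟨by decide, by decide⟩

lemma bipIntervalRealizable_atEx_btEx : BipIntervalRealizable 6 atEx btEx := by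
  refine ⟨.ofBiadj witnessRel, inferInstance, fun _ _ => SimpleGraph.ofBiadj_isLeft_ne_of_adj _,
    ?_, ?_⟩
  · intro i
    rw [SimpleGraph.degree_ofBiadj_inl, card_witnessRel_left]
    exact ⟨le_rfl, atEx_le_btEx _⟩
  · intro i
    rw [SimpleGraph.degree_ofBiadj_inr, card_witnessRel_right]
    exact ⟨le_rfl, atEx_le_btEx _⟩

lemma not_realizable_aEx_bEx : ¬ Realizable 6 aEx bEx := by
  rintro ⟨G, _, hdeg⟩
  obtain ⟨h0, h0'⟩ := hdeg 0
  obtain ⟨h1, h1'⟩ := hdeg 1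
  obtain ⟨h2, h2'⟩ := hdeg 2
  obtain ⟨h3, h3'⟩ := hdeg 3
  obtain ⟨h4, h4'⟩ := hdeg 4
  obtain ⟨h5, h5'⟩ := hdeg 5
  norm_num [aEx, bEx] at h0 h0' h1 h1' h2 h2' h3 h3' h4 h4' h5 h5'
  have hd1 : G.degree 1 = 5 := by
    have := G.sum_degrees_eq_twice_card_edges
    rw [Fin.sum_univ_six] at this
    omega
  have hu0 : G.IsUniversal 0 := (G.degree_eq_card_sub_one 0).1 (by rw [Fintype.card_fin]; omega)
  have hu1 : G.IsUniversal 1 := (G.degree_eq_card_sub_one 1).1 (by rw [Fintype.card_fin]; omega)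
  have := SimpleGraph.two_le_degree_of_isUniversal (w := 5) hu0 hu1 (by decide) (by decide)
    (by decide)
  omega

/-- For `A=(5,4,3,3,3,1)`, `B=(5,5,3,3,3,1)` (in good order, `a_i ≤ b_i`), one has
`Ã=(6,5,4,3,3,1)`, `B̃=(6,6,4,3,3,1)`, the interval pair `(S;S)` is bipartite-interval
realizable, yet `(A;B)` is not realizable. -/
theorem bip_interval_not_sufficient :
    GoodOrder 6 aEx bEx ∧ (∀ i, 1 ≤ i → i ≤ 6 → aEx i ≤ bEx i) ∧
    (∀ i, 1 ≤ i → i ≤ 6 → tilde 6 aEx i = atEx i ∧ tilde 6 bEx i = btEx i) ∧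
    BipIntervalRealizable 6 (tilde 6 aEx) (tilde 6 bEx) ∧
    ¬ Realizable 6 aEx bEx := by
  refine ⟨goodOrder_aEx_bEx, fun i _ _ => aEx_le_bEx i, tilde_aEx_bEx, ?_, not_realizable_aEx_bEx⟩
  exact bipIntervalRealizable_atEx_btEx.congr (fun i h1 h6 => (tilde_aEx_bEx i h1 h6).1.symm)
    (fun i h1 h6 => (tilde_aEx_bEx i h1 h6).2.symm)
end

section
/- Let A and B be nonnegative integer sequences in good order with a_i ≤ b_i for all i, and define f(t) = t(t−1) + ∑_{i=t+1}^n min{t, b_i} − ∑_{i=1}^t a_i − ε(t). If t > s where s = max{i : a_i ≥ i−1}, then f(t+1) > f(t); consequently f is strictly increasing for t > s. -/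
open Finset
open Classical

/-- For `t > s = max{i : a_i ≥ i−1}` (with `t+1 ≤ n`), the function
`f(t) = t(t−1) + ∑_{i=t+1}^n min{t, b_i} − ∑_{i=1}^t a_i − ε(t)` satisfies
`f(t+1) > f(t)`; hence `f` is strictly increasing for `t > s`. -/
theorem cdz_slack_strict_mono (n : ℕ) (a b : ℕ → ℕ)
    (hgood : GoodOrder n a b) (hab : ∀ i, 1 ≤ i → i ≤ n → a i ≤ b i)
    (f : ℕ → ℤ)
    (hf : ∀ t, f t = (t : ℤ) * ((t : ℤ) - 1)
      + (∑ i ∈ Finset.Icc (t + 1) n, min (t : ℤ) (b i : ℤ))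
      - (∑ i ∈ Finset.Icc 1 t, (a i : ℤ)) - eps n a b t) :
    ∀ t, sIdx n a < t → t + 1 ≤ n → f t < f (t + 1) := by
  intro t ht htn
  -- a (t+1) ≤ t - 1
  have ha : (a (t + 1) : ℤ) + 1 ≤ (t : ℤ) := by
    by_contra h
    push_neg at h
    have ha' : t + 1 ≤ a (t + 1) + 1 := by exact_mod_cast by linarith
    have hmem : t + 1 ∈ (Finset.Icc 1 n).filter fun i => i ≤ a i + 1 := by
      simp only [Finset.mem_filter, Finset.mem_Icc]
      exact ⟨⟨Nat.le_add_left 1 t, htn⟩, ha'⟩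
    have := Finset.le_sup (f := id) hmem
    simp only [id] at this
    unfold sIdx at ht
    omega
  -- split sums
  have hsplit : (∑ i ∈ Finset.Icc (t + 1) n, min (t : ℤ) (b i : ℤ))
      = min (t : ℤ) (b (t + 1) : ℤ) + ∑ i ∈ Finset.Icc (t + 2) n, min (t : ℤ) (b i : ℤ) := by
    have hmem : t + 1 ∈ Finset.Icc (t + 1) n := Finset.mem_Icc.2 ⟨le_refl _, htn⟩
    rw [← Finset.add_sum_erase _ _ hmem, Finset.Icc_erase_left]
    congr 1
    rw [← Finset.Icc_add_one_left_eq_Ioc]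
    rfl
  have hsplit2 : (∑ i ∈ Finset.Icc (t + 1 + 1) n, min ((t : ℤ) + 1) (b i : ℤ))
      = ∑ i ∈ Finset.Icc (t + 2) n, min ((t : ℤ) + 1) (b i : ℤ) := rfl
  have hsplita : (∑ i ∈ Finset.Icc 1 (t + 1), (a i : ℤ))
      = (∑ i ∈ Finset.Icc 1 t, (a i : ℤ)) + (a (t + 1) : ℤ) := by
    rw [Finset.sum_Icc_succ_top (by omega : 1 ≤ t + 1)]
  have heps0 : (0 : ℤ) ≤ eps n a b t := by
    unfold eps; split <;> norm_num
  have hmin : min (t : ℤ) (b (t + 1) : ℤ) ≤ (t : ℤ) := min_le_left _ _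
  rw [hf t, hf (t + 1), hsplit, hsplita]
  push_cast
  rw [hsplit2]
  by_cases hc : (∀ i ∈ Iset n b (t + 1), a i = b i) ∧
      Odd (∑ i ∈ Iset n b (t + 1), b i + (t + 1) * (Iset n b (t + 1)).card)
  · have heps1 : eps n a b (t + 1) = 1 := by unfold eps; rw [if_pos hc]
    -- Iset nonempty
    obtain ⟨i0, hi0⟩ : (Iset n b (t + 1)).Nonempty := by
      rw [Finset.nonempty_iff_ne_empty]
      intro he
      rw [he] at hc
      simp at hc
    rw [Iset, Finset.mem_filter, Finset.mem_Icc] at hi0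
    obtain ⟨⟨hi1, hi2⟩, hi3⟩ := hi0
    have key : (∑ i ∈ Finset.Icc (t + 2) n, min (t : ℤ) (b i : ℤ)) + 1
        ≤ ∑ i ∈ Finset.Icc (t + 2) n, min ((t : ℤ) + 1) (b i : ℤ) := by
      have hmem : i0 ∈ Finset.Icc (t + 2) n := Finset.mem_Icc.2 ⟨hi1, hi2⟩
      rw [← Finset.add_sum_erase _ _ hmem, ← Finset.add_sum_erase _ (fun i => min ((t:ℤ)+1) (b i : ℤ)) hmem]
      have h1 : min (t : ℤ) (b i0 : ℤ) = (t : ℤ) := min_eq_left (by exact_mod_cast by omega)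
      have h2 : min ((t : ℤ) + 1) (b i0 : ℤ) = (t : ℤ) + 1 :=
        min_eq_left (by exact_mod_cast by omega)
      rw [h1, h2]
      have : ∀ i ∈ (Finset.Icc (t + 2) n).erase i0,
          min (t : ℤ) (b i : ℤ) ≤ min ((t : ℤ) + 1) (b i : ℤ) := fun i _ =>
        min_le_min (by linarith) le_rfl
      have := Finset.sum_le_sum this
      linarith
    rw [heps1]
    linarith
  · have heps1 : eps n a b (t + 1) = 0 := by unfold eps; rw [if_neg hc]
    have key : (∑ i ∈ Finset.Icc (t + 2) n, min (t : ℤ) (b i : ℤ))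
        ≤ ∑ i ∈ Finset.Icc (t + 2) n, min ((t : ℤ) + 1) (b i : ℤ) :=
      Finset.sum_le_sum fun i _ => min_le_min (by linarith) le_rfl
    rw [heps1]
    linarith
end
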